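/- arXiv:2303.11153 — 3 statements merged into one kernel-verified Lean document; each statement's English description precedes it below -/
import Mathlib

section
/- Let θ > 0, T > 0, let p_1, …, p_K be strictly positive reals with Σ_{k=1}^K p_k = 1, let n_max ≥ 1, and let n_1, …, n_K be reals with 1 ≤ n_k ≤ n_max. Define Pr_k = (p_k/n_k)/(Σ_{i=1}^K p_i/n_i), the exact statistical AoI Δ_sta(θ) = (1/θ) log(Σ_{k=1}^K Pr_k e^{2θ n_k T}), and the large-exponent approximation Δ^l_sta(θ) = (1/θ) log(Σ_{k=1}^K p_k e^{2θ n_k T}). Then |Δ^l_sta(θ) − Δ_sta(θ)| ≤ (1/θ) log n_max. -/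
/-- Approximation-error bound of Eq. (16): the large-exponent approximation of
the statistical AoI differs from the exact one by at most `(1/θ) log n_max`. -/
theorem statistical_aoi_large_exponent_error_bound
    (θ T : ℝ) (hθ : 0 < θ) (hT : 0 < T)
    (K : ℕ) (p n : Fin K → ℝ) (nmax : ℝ) (hnmax : 1 ≤ nmax)
    (hp : ∀ k, 0 < p k) (hsum : ∑ k, p k = 1)
    (hn1 : ∀ k, 1 ≤ n k) (hn2 : ∀ k, n k ≤ nmax) :
    |(1 / θ) * Real.log (∑ k, p k * Real.exp (2 * θ * n k * T)) -
        (1 / θ) * Real.log (∑ k, ((p k / n k) / (∑ i, p i / n i)) *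
          Real.exp (2 * θ * n k * T))|
      ≤ (1 / θ) * Real.log nmax := by
  have hK : 0 < K := by
    rcases Nat.eq_zero_or_pos K with h | h
    · subst h; simp at hsum
    · exact h
  have hne : (Finset.univ : Finset (Fin K)).Nonempty := by
    simpa [Finset.univ_nonempty_iff] using Fin.pos_iff_nonempty.mp hK
  have hnmax0 : (0:ℝ) < nmax := lt_of_lt_of_le one_pos hnmax
  have hnpos : ∀ k, (0:ℝ) < n k := fun k => lt_of_lt_of_le one_pos (hn1 k)
  set S := ∑ i, p i / n i with hS
  have hSpos : 0 < S :=
    Finset.sum_pos (fun i _ => div_pos (hp i) (hnpos i)) hne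
  have hSle1 : S ≤ 1 := by
    calc S ≤ ∑ i, p i := by
            apply Finset.sum_le_sum
            intro i _
            exact div_le_self (hp i).le (hn1 i)
      _ = 1 := hsum
  have hSge : 1 / nmax ≤ S := by
    have : ∑ i, p i / nmax ≤ S := by
      apply Finset.sum_le_sum
      intro i _
      exact div_le_div_of_nonneg_left (hp i).le (hnpos i) (hn2 i)
    calc 1 / nmax = ∑ i, p i / nmax := by
          rw [← Finset.sum_div, hsum]
      _ ≤ S := this
  set A := ∑ k, p k * Real.exp (2 * θ * n k * T) with hA
  set B := ∑ k, ((p k / n k) / S) * Real.exp (2 * θ * n k * T) with hB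
  have hApos : 0 < A :=
    Finset.sum_pos (fun k _ => mul_pos (hp k) (Real.exp_pos _)) hne
  have hBpos : 0 < B :=
    Finset.sum_pos (fun k _ =>
      mul_pos (div_pos (div_pos (hp k) (hnpos k)) hSpos) (Real.exp_pos _)) hne
  -- B ≤ nmax * A
  have hBA : B ≤ nmax * A := by
    rw [hB, hA, Finset.mul_sum]
    apply Finset.sum_le_sum
    intro k _
    rw [← mul_assoc]
    apply mul_le_mul_of_nonneg_right _ (Real.exp_pos _).le
    have h1 : p k / n k ≤ p k := div_le_self (hp k).le (hn1 k)
    have h2 : (p k / n k) / S ≤ p k / S := by gcongr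
    calc (p k / n k) / S ≤ p k / S := h2
      _ ≤ p k / (1 / nmax) := by
          gcongr
          exact (hp k).le
      _ = nmax * p k := by field_simp
  -- A ≤ nmax * B
  have hAB : A ≤ nmax * B := by
    rw [hB, hA, Finset.mul_sum]
    apply Finset.sum_le_sum
    intro k _
    rw [← mul_assoc]
    apply mul_le_mul_of_nonneg_right _ (Real.exp_pos _).le
    have h1 : p k / nmax ≤ p k / n k :=
      div_le_div_of_nonneg_left (hp k).le (hnpos k) (hn2 k)
    have h2 : (p k / n k) / 1 ≤ (p k / n k) / S := by
      apply div_le_div_of_nonneg_left (div_pos (hp k) (hnpos k)).le hSpos hSle1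
    have h3 : p k / nmax ≤ (p k / n k) / S := by
      calc p k / nmax ≤ p k / n k := h1
        _ = (p k / n k) / 1 := by rw [div_one]
        _ ≤ (p k / n k) / S := h2
    calc p k = nmax * (p k / nmax) := by field_simp
      _ ≤ nmax * ((p k / n k) / S) := by
          exact mul_le_mul_of_nonneg_left h3 hnmax0.le
  have hlog1 : Real.log A - Real.log B ≤ Real.log nmax := by
    have := Real.log_le_log hApos hAB
    rw [Real.log_mul (ne_of_gt hnmax0) (ne_of_gt hBpos)] at this
    linarith
  have hlog2 : Real.log B - Real.log A ≤ Real.log nmax := by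
    have := Real.log_le_log hBpos hBA
    rw [Real.log_mul (ne_of_gt hnmax0) (ne_of_gt hApos)] at this
    linarith
  have habs : |Real.log A - Real.log B| ≤ Real.log nmax := by
    rw [abs_sub_le_iff]
    exact ⟨hlog1, hlog2⟩
  rw [← mul_sub, abs_mul, abs_of_pos (by positivity : (0:ℝ) < 1/θ)]
  exact mul_le_mul_of_nonneg_left habs (by positivity)
end

section
/- Let T > 0, B > 0, N > 0, c ≥ 0, n_1, …, n_K > 0, γ_1, …, γ_K > 0, and p_1, …, p_K ≥ 0, and define g(n) = (N + c√(nTB))/(nTB) and w_k* = (2^{g(n_k)} − 1)/γ_k. Suppose w_1, …, w_K ≥ 0 satisfy the bit constraints (log₂(1 + w_k γ_k) − c/√(n_k T B)) · n_k T B ≥ N for all k and the average power constraint Σ_{k=1}^K w_k p_k ≤ w̄. Then w_k* ≤ w_k for all k, the vector (w_1*, …, w_K*) satisfies all the bit constraints with equality, and Σ_{k=1}^K w_k* p_k ≤ w̄. -/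
/-!
Since `M = n T B > 0`, the bit constraint `(log₂ (1 + w γ) − c / √M) M ≥ N` rearranges to
`g(n) ≤ log₂ (1 + w γ)`, i.e. `2 ^ g(n) ≤ 1 + w γ`. As `γ > 0` this says exactly `w* ≤ w`,
and `w*` is the value at which the rearranged constraint becomes an equality. Summing the
domination `w_k* ≤ w_k` against the weights `p_k ≥ 0` gives the power budget.
-/

open Real

namespace BitConstraint

/-- The paper's `w_k*`, with `M = n_k T B` channel uses and `γ = γ_k`. -/
noncomputable def minPower (N c M γ : ℝ) : ℝ :=
  (2 ^ ((N + c * √M) / M) - 1) / γ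

theorem sub_div_sqrt_mul_self (x c M : ℝ) : (x - c / √M) * M = x * M - c * √M := by
  rw [sub_mul, div_mul_eq_mul_div, mul_div_assoc, div_sqrt]

theorem le_sub_div_sqrt_mul_iff {M : ℝ} (hM : 0 < M) (x c N : ℝ) :
    N ≤ (x - c / √M) * M ↔ (N + c * √M) / M ≤ x := by
  rw [sub_div_sqrt_mul_self, div_le_iff₀ hM]
  constructor <;> intro h <;> linarith

theorem minPower_le {N c M γ w : ℝ} (hM : 0 < M) (hγ : 0 < γ) (hw : 0 ≤ w)
    (hbit : N ≤ (logb 2 (1 + w * γ) - c / √M) * M) : minPower N c M γ ≤ w := by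
  have hpos : 0 < 1 + w * γ := by positivity
  have hexp : 2 ^ ((N + c * √M) / M) ≤ 1 + w * γ :=
    (le_logb_iff_rpow_le one_lt_two hpos).1 ((le_sub_div_sqrt_mul_iff hM _ _ _).1 hbit)
  rw [minPower, div_le_iff₀ hγ]
  linarith

theorem bit_constraint_minPower_eq {N c M γ : ℝ} (hM : M ≠ 0) (hγ : γ ≠ 0) :
    (logb 2 (1 + minPower N c M γ * γ) - c / √M) * M = N := by
  rw [minPower, div_mul_cancel₀ _ hγ, add_sub_cancel, logb_rpow two_pos (by norm_num),
    sub_div_sqrt_mul_self, div_mul_cancel₀ _ hM, add_sub_cancel_right]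

end BitConstraint

open BitConstraint in
theorem optimal_power_achieves_bit_constraint_equality_general
    (T B N c : ℝ) (hT : 0 < T) (hB : 0 < B)
    (K : ℕ) (n γ p w : Fin K → ℝ) (wbar : ℝ)
    (hn : ∀ k, 0 < n k) (hγ : ∀ k, 0 < γ k) (hp : ∀ k, 0 ≤ p k)
    (hw : ∀ k, 0 ≤ w k)
    (hbit : ∀ k,
      (Real.logb 2 (1 + w k * γ k) - c / Real.sqrt (n k * T * B)) *
        (n k * T * B) ≥ N)
    (hpow : ∑ k, w k * p k ≤ wbar) :
    (∀ k,
      ((2 : ℝ) ^ ((N + c * Real.sqrt (n k * T * B)) / (n k * T * B)) - 1) / γ k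
        ≤ w k) ∧
    (∀ k,
      (Real.logb 2 (1 +
          (((2 : ℝ) ^ ((N + c * Real.sqrt (n k * T * B)) / (n k * T * B)) - 1)
            / γ k) * γ k) - c / Real.sqrt (n k * T * B)) * (n k * T * B) = N) ∧
    ∑ k, (((2 : ℝ) ^ ((N + c * Real.sqrt (n k * T * B)) / (n k * T * B)) - 1)
        / γ k) * p k ≤ wbar := by
  have hM : ∀ k, 0 < n k * T * B := fun k => by have := hn k; positivity
  have hdom : ∀ k, minPower N c (n k * T * B) (γ k) ≤ w k := fun k =>
    minPower_le (hM k) (hγ k) (hw k) (hbit k)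
  refine ⟨hdom, fun k => bit_constraint_minPower_eq (hM k).ne' (hγ k).ne', ?_⟩
  calc ∑ k, minPower N c (n k * T * B) (γ k) * p k
      ≤ ∑ k, w k * p k :=
        Finset.sum_le_sum fun k _ => mul_le_mul_of_nonneg_right (hdom k) (hp k)
    _ ≤ wbar := hpow

/-- The powers `w_k* = (2^{g(n_k)} − 1)/γ_k` meet all bit constraints with
equality, are dominated by any feasible powers, and hence satisfy the average
power constraint: the optimum of P0 keeps equality in the bit constraint (6). -/
theorem optimal_power_achieves_bit_constraint_equality
    (T B N c : ℝ) (hT : 0 < T) (hB : 0 < B) (hN : 0 < N) (hc : 0 ≤ c)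
    (K : ℕ) (n γ p w : Fin K → ℝ) (wbar : ℝ)
    (hn : ∀ k, 0 < n k) (hγ : ∀ k, 0 < γ k) (hp : ∀ k, 0 ≤ p k)
    (hw : ∀ k, 0 ≤ w k)
    (hbit : ∀ k,
      (Real.logb 2 (1 + w k * γ k) - c / Real.sqrt (n k * T * B)) *
        (n k * T * B) ≥ N)
    (hpow : ∑ k, w k * p k ≤ wbar) :
    (∀ k,
      ((2 : ℝ) ^ ((N + c * Real.sqrt (n k * T * B)) / (n k * T * B)) - 1) / γ k
        ≤ w k) ∧
    (∀ k,
      (Real.logb 2 (1 +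
          (((2 : ℝ) ^ ((N + c * Real.sqrt (n k * T * B)) / (n k * T * B)) - 1)
            / γ k) * γ k) - c / Real.sqrt (n k * T * B)) * (n k * T * B) = N) ∧
    ∑ k, (((2 : ℝ) ^ ((N + c * Real.sqrt (n k * T * B)) / (n k * T * B)) - 1)
        / γ k) * p k ≤ wbar :=
  optimal_power_achieves_bit_constraint_equality_general T B N c hT hB K n γ p w wbar hn hγ hp hw
    hbit hpow
end

section
/- Let θ > 0, T > 0, α > 0, a > 0, b ≥ 0, and define g(n) = a/n + b/√n on (0, ∞) and h(n, γ) = 2θT e^{2θnT} + (α/γ) g′(n) 2^{g(n)} ln 2 for n, γ > 0. Then for every fixed γ > 0, the function n ↦ h(n, γ) is strictly increasing on (0, ∞). -/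
/-!
The first term `2θT e^{2θnT}` is strictly increasing. In the second term, `g'(n)` is
nonpositive and increasing while `2^{g(n)}` is positive and decreasing (as `g` is), so their
product is increasing; a positive multiple of it keeps this monotonicity.
-/

open Real Set

theorem MonotoneOn.mul_antitoneOn_of_nonpos_of_nonneg {α R : Type*} [Preorder α] [Ring R]
    [PartialOrder R] [IsOrderedRing R] {s : Set α} {f g : α → R} (hf : MonotoneOn f s)
    (hg : AntitoneOn g s) (hf₀ : ∀ x ∈ s, f x ≤ 0) (hg₀ : ∀ x ∈ s, 0 ≤ g x) :
    MonotoneOn (fun x => f x * g x) s := fun x hx y hy hxy =>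
  calc f x * g x ≤ f y * g x := mul_le_mul_of_nonneg_right (hf hx hy hxy) (hg₀ x hx)
    _ ≤ f y * g y := mul_le_mul_of_nonpos_left (hg hx hy hxy) (hf₀ y hy)

section RequiredRate

variable {a b : ℝ}

theorem antitoneOn_div_add_div_sqrt (ha : 0 ≤ a) (hb : 0 ≤ b) :
    AntitoneOn (fun n : ℝ => a / n + b / √n) (Ioi 0) := fun _ hx _ _ hxy =>
  add_le_add (div_le_div_of_nonneg_left ha hx hxy)
    (div_le_div_of_nonneg_left hb (sqrt_pos.2 hx) (sqrt_le_sqrt hxy))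

theorem antitoneOn_two_rpow_div_add_div_sqrt (ha : 0 ≤ a) (hb : 0 ≤ b) :
    AntitoneOn (fun n : ℝ => (2 : ℝ) ^ (a / n + b / √n)) (Ioi 0) :=
  (monotone_rpow_of_base_ge_one one_le_two).comp_antitoneOn (antitoneOn_div_add_div_sqrt ha hb)

theorem monotoneOn_neg_div_sq_sub_div_rpow (ha : 0 ≤ a) (hb : 0 ≤ b) :
    MonotoneOn (fun n : ℝ => -(a / n ^ 2) - b / (2 * n ^ ((3 : ℝ) / 2))) (Ioi 0) :=
  fun x (hx : 0 < x) y _ hxy => by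
    have hsq : a / y ^ 2 ≤ a / x ^ 2 := div_le_div_of_nonneg_left ha (by positivity)
      (pow_le_pow_left₀ hx.le hxy 2)
    have hrpow : b / (2 * y ^ ((3 : ℝ) / 2)) ≤ b / (2 * x ^ ((3 : ℝ) / 2)) :=
      div_le_div_of_nonneg_left hb (by positivity)
        (mul_le_mul_of_nonneg_left (rpow_le_rpow hx.le hxy (by norm_num)) two_pos.le)
    dsimp only
    linarith

theorem neg_div_sq_sub_div_rpow_nonpos (ha : 0 ≤ a) (hb : 0 ≤ b) {n : ℝ} (hn : 0 < n) :
    -(a / n ^ 2) - b / (2 * n ^ ((3 : ℝ) / 2)) ≤ 0 := by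
  have : 0 ≤ a / n ^ 2 := by positivity
  have : 0 ≤ b / (2 * n ^ ((3 : ℝ) / 2)) := by positivity
  linarith

end RequiredRate

/-- The Lagrangian-stationarity function
`h(n, γ) = 2θT e^{2θnT} + (α/γ) g'(n) 2^{g(n)} ln 2`,
with `g(n) = a/n + b/√n` and `g'(n) = -a/n² - b/(2 n^{3/2})`,
is strictly increasing in `n` on `(0, ∞)` for every fixed `γ > 0`. -/
theorem kkt_function_strictMono_in_n
    (θ T α a b : ℝ) (hθ : 0 < θ) (hT : 0 < T) (hα : 0 < α) (ha : 0 < a)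
    (hb : 0 ≤ b) (γ : ℝ) (hγ : 0 < γ) :
    StrictMonoOn
      (fun n : ℝ => 2 * θ * T * Real.exp (2 * θ * n * T) +
        (α / γ) * (-(a / n ^ 2) - b / (2 * n ^ ((3 : ℝ) / 2))) *
          (2 : ℝ) ^ (a / n + b / Real.sqrt n) * Real.log 2)
      (Set.Ioi 0) := by
  have hexp : StrictMonoOn (fun n : ℝ => 2 * θ * T * exp (2 * θ * n * T)) (Ioi 0) :=
    fun x _ y _ hxy => mul_lt_mul_of_pos_left (exp_lt_exp.2 (by gcongr)) (by positivity)
  have hprod := (monotoneOn_neg_div_sq_sub_div_rpow ha.le hb).mul_antitoneOn_of_nonpos_of_nonneg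
    (antitoneOn_two_rpow_div_add_div_sqrt ha.le hb)
    (fun _ hn => neg_div_sq_sub_div_rpow_nonpos ha.le hb hn) (fun _ _ => by positivity)
  have hscale : 0 ≤ α / γ * log 2 := by positivity
  refine hexp.add_monotone fun x hx y hy hxy => ?_
  have := mul_le_mul_of_nonneg_left (hprod hx hy hxy) hscale
  dsimp only at this ⊢
  linarith
end
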